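/- For every n ≥ 0 and all real numbers σ and t, the connecting relation (σ t)_n = ∑_{k=0}^{n} C(n,k,σ) (t)_k holds (as a polynomial identity in t), where the generalized factorial coefficients are C(n,k,σ) = (1/k!) ∑_{j=0}^{k} (-1)^j binom(k,j) (-jσ)_n. -/

import Mathlib

/-- The Pochhammer rising factorial `(a)_n`. -/
noncomputable def riseFac (a : ℝ) (n : ℕ) : ℝ := ∏ i ∈ Finset.range n, (a + i)

/-- Generalized factorial coefficient. -/
noncomputable def genFacCoeff (n k : ℕ) (σ : ℝ) : ℝ :=
  (1 / (k.factorial : ℝ)) *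
    ∑ j ∈ Finset.range (k + 1), (-1 : ℝ) ^ j * (k.choose j : ℝ) * riseFac (-(j * σ)) n

open Finset Polynomial

lemma riseFac_succ (a : ℝ) (n : ℕ) : riseFac a (n + 1) = riseFac a n * (a + n) := by
  simp [riseFac, Finset.prod_range_succ]

lemma riseFac_neg_nat_eq_zero {m k : ℕ} (h : m < k) : riseFac (-(m : ℝ)) k = 0 := by
  apply Finset.prod_eq_zero (Finset.mem_range.2 h)
  simp

lemma riseFac_neg_nat {m k : ℕ} (h : k ≤ m) :
    riseFac (-(m : ℝ)) k = (-1 : ℝ) ^ k * (m.descFactorial k : ℝ) := by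
  induction k with
  | zero => simp [riseFac]
  | succ k ih =>
    have hk : k ≤ m := Nat.le_of_succ_le h
    rw [riseFac_succ, ih hk, Nat.descFactorial_succ]
    have : (-(m : ℝ) + k) = -(((m - k : ℕ)) : ℝ) := by
      have := Nat.cast_sub hk (R := ℝ)
      rw [this]; ring
    rw [this]
    push_cast
    ring

/-- Binomial inversion. -/
lemma inversion (f : ℕ → ℝ) (m : ℕ) :
    ∑ k ∈ Finset.range (m + 1), (-1 : ℝ) ^ k * (m.choose k : ℝ) *
      ∑ j ∈ Finset.range (k + 1), (-1 : ℝ) ^ j * (k.choose j : ℝ) * f j = f m := by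
  have h1 : ∀ k ∈ Finset.range (m + 1),
      (-1 : ℝ) ^ k * (m.choose k : ℝ) *
        ∑ j ∈ Finset.range (k + 1), (-1 : ℝ) ^ j * (k.choose j : ℝ) * f j
      = ∑ j ∈ Finset.range (m + 1),
          (-1 : ℝ) ^ (k + j) * (m.choose k : ℝ) * (k.choose j : ℝ) * f j := by
    intro k hk
    rw [Finset.mul_sum]
    rw [Finset.sum_subset (Finset.range_subset_range.2 (Finset.mem_range.1 hk))]
    · apply Finset.sum_congr rfl
      intro j _
      rw [pow_add]; ring
    · intro j _ hj
      have : k < j := by simpa using hj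
      rw [Nat.choose_eq_zero_of_lt this]
      simp
  rw [Finset.sum_congr rfl h1, Finset.sum_comm]
  have h2 : ∀ j ∈ Finset.range (m + 1),
      ∑ k ∈ Finset.range (m + 1), (-1 : ℝ) ^ (k + j) * (m.choose k : ℝ) * (k.choose j : ℝ) * f j
      = if j = m then f m else 0 := by
    intro j hj
    have hjm : j ≤ m := Nat.lt_succ_iff.1 (Finset.mem_range.1 hj)
    rw [← Finset.sum_subset (by intro x hx; simp only [Finset.mem_Ico] at hx; exact Finset.mem_range.2 hx.2 : Finset.Ico j (m+1) ⊆ Finset.range (m+1))]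
    · rw [Finset.sum_Ico_eq_sum_range]
      have hsub : m + 1 - j = (m - j) + 1 := by omega
      rw [hsub]
      have h3 : ∀ i ∈ Finset.range ((m - j) + 1),
          (-1 : ℝ) ^ (j + i + j) * (m.choose (j + i) : ℝ) * ((j + i).choose j : ℝ) * f j
          = ((m.choose j : ℝ) * f j) * ((-1 : ℝ) ^ i * ((m - j).choose i : ℝ)) := by
        intro i hi
        have hi' : i ≤ m - j := Nat.lt_succ_iff.1 (Finset.mem_range.1 hi)
        have hkn : j + i ≤ m := by omega
        have := Nat.choose_mul (n := m) (Nat.le_add_right j i)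
        rw [Nat.add_sub_cancel_left] at this
        have hcast : (m.choose (j + i) : ℝ) * ((j + i).choose j : ℝ)
            = (m.choose j : ℝ) * ((m - j).choose i : ℝ) := by
          exact_mod_cast congrArg (Nat.cast (R := ℝ)) this
        calc (-1 : ℝ) ^ (j + i + j) * (m.choose (j + i) : ℝ) * ((j + i).choose j : ℝ) * f j
            = ((m.choose (j+i) : ℝ) * ((j+i).choose j : ℝ)) * ((-1:ℝ) ^ (j + i + j) * f j) := by
              ring
          _ = ((m.choose j : ℝ) * ((m - j).choose i : ℝ)) * ((-1:ℝ) ^ (j + i + j) * f j) := by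
              rw [hcast]
          _ = ((m.choose j : ℝ) * f j) * ((-1 : ℝ) ^ i * ((m - j).choose i : ℝ)) := by
              have : (-1 : ℝ) ^ (j + i + j) = (-1 : ℝ) ^ i := by
                rw [show j + i + j = 2 * j + i by ring, pow_add, pow_mul]
                simp
              rw [this]; ring
      rw [Finset.sum_congr rfl h3, ← Finset.mul_sum]
      have halt : ∑ i ∈ Finset.range ((m - j) + 1), (-1 : ℝ) ^ i * ((m - j).choose i : ℝ)
          = if m - j = 0 then 1 else 0 := by
        have := Int.alternating_sum_range_choose (n := m - j)
        have h := congrArg (Int.cast : ℤ → ℝ) this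
        push_cast at h
        convert h using 2
      rw [halt]
      by_cases hcase : j = m
      · subst hcase; simp
      · have : m - j ≠ 0 := by omega
        simp [this, hcase]
    · intro k _ hk
      have : k < j := by
        simp only [Finset.mem_Ico] at hk
        by_contra h
        push_neg at h
        exact hk ⟨h, by simpa using ‹k ∈ Finset.range (m+1)›⟩
      rw [Nat.choose_eq_zero_of_lt this]
      simp
  rw [Finset.sum_congr rfl h2]
  simp

lemma keyA (σ : ℝ) (n m : ℕ) (hm : m ≤ n) :
    ∑ k ∈ Finset.range (n + 1), genFacCoeff n k σ * riseFac (-(m : ℝ)) k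
      = riseFac (-(m * σ)) n := by
  rw [← Finset.sum_subset (Finset.range_subset_range.2 (by omega) :
      Finset.range (m + 1) ⊆ Finset.range (n + 1))]
  · have h1 : ∀ k ∈ Finset.range (m + 1),
        genFacCoeff n k σ * riseFac (-(m : ℝ)) k
        = (-1 : ℝ) ^ k * (m.choose k : ℝ) *
            ∑ j ∈ Finset.range (k + 1), (-1 : ℝ) ^ j * (k.choose j : ℝ)
              * riseFac (-((j : ℝ) * σ)) n := by
      intro k hk
      have hkm : k ≤ m := Nat.lt_succ_iff.1 (Finset.mem_range.1 hk)
      rw [riseFac_neg_nat hkm, genFacCoeff, Nat.descFactorial_eq_factorial_mul_choose]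
      have hfac : (k.factorial : ℝ) ≠ 0 := Nat.cast_ne_zero.2 k.factorial_ne_zero
      push_cast
      field_simp
      simp only [mul_comm σ]
      ring
    rw [Finset.sum_congr rfl h1]
    exact inversion (fun j => riseFac (-((j : ℝ) * σ)) n) m
  · intro k hk hk'
    have : m < k := by
      simp only [Finset.mem_range] at hk hk'
      omega
    rw [riseFac_neg_nat_eq_zero this]
    ring

noncomputable def risePoly (k : ℕ) : Polynomial ℝ :=
  ∏ i ∈ Finset.range k, (Polynomial.X + Polynomial.C (i : ℝ))

lemma risePoly_eval (t : ℝ) (k : ℕ) : (risePoly k).eval t = riseFac t k := by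
  simp [risePoly, riseFac, Polynomial.eval_prod]

lemma risePoly_natDegree_le (k : ℕ) : (risePoly k).natDegree ≤ k := by
  refine le_trans (Polynomial.natDegree_prod_le _ _) ?_
  calc ∑ i ∈ Finset.range k, (Polynomial.X + Polynomial.C (i : ℝ)).natDegree
      ≤ ∑ _i ∈ Finset.range k, 1 := by
        apply Finset.sum_le_sum
        intro i _
        rw [Polynomial.natDegree_X_add_C]
    _ = k := by simp

/-- Connecting relation `(σt)_n = ∑_{k=0}^n C(n,k,σ) (t)_k` for all real `σ, t`. -/
theorem genFacCoeff_connecting (σ t : ℝ) (n : ℕ) :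
    ∑ k ∈ Finset.range (n + 1), genFacCoeff n k σ * riseFac t k = riseFac (σ * t) n := by
  set L : Polynomial ℝ :=
    ∑ k ∈ Finset.range (n + 1), Polynomial.C (genFacCoeff n k σ) * risePoly k with hLdef
  set R : Polynomial ℝ :=
    ∏ i ∈ Finset.range n, (Polynomial.C σ * Polynomial.X + Polynomial.C (i : ℝ)) with hRdef
  have hLeval : ∀ x : ℝ, L.eval x
      = ∑ k ∈ Finset.range (n + 1), genFacCoeff n k σ * riseFac x k := by
    intro x
    rw [hLdef, Polynomial.eval_finset_sum]
    apply Finset.sum_congr rfl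
    intro k _
    rw [Polynomial.eval_mul, Polynomial.eval_C, risePoly_eval]
  have hReval : ∀ x : ℝ, R.eval x = riseFac (σ * x) n := by
    intro x
    simp [hRdef, Polynomial.eval_prod, riseFac]
  have hLdeg : L.natDegree ≤ n := by
    refine le_trans (Polynomial.natDegree_sum_le _ _) ?_
    refine (Finset.fold_max_le n).2 ⟨Nat.zero_le n, ?_⟩
    intro k hk
    refine le_trans (Polynomial.natDegree_mul_le) ?_
    simp only [Polynomial.natDegree_C, Nat.zero_add]
    exact le_trans (risePoly_natDegree_le k) (Nat.lt_succ_iff.1 (Finset.mem_range.1 hk))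
  have hRdeg : R.natDegree ≤ n := by
    refine le_trans (Polynomial.natDegree_prod_le _ _) ?_
    calc ∑ i ∈ Finset.range n,
          (Polynomial.C σ * Polynomial.X + Polynomial.C (i : ℝ)).natDegree
        ≤ ∑ _i ∈ Finset.range n, 1 := by
          apply Finset.sum_le_sum
          intro i _
          refine le_trans (Polynomial.natDegree_add_le _ _) ?_
          simp only [Polynomial.natDegree_C, max_le_iff]
          refine ⟨le_trans (Polynomial.natDegree_mul_le) ?_, Nat.zero_le 1⟩
          simp [Polynomial.natDegree_X]
      _ = n := by simp
  have hzero : L - R = 0 := by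
    apply Polynomial.eq_zero_of_natDegree_lt_card_of_eval_eq_zero' _
      ((Finset.range (n + 1)).image (fun m : ℕ => -(m : ℝ)))
    · intro x hx
      simp only [Finset.mem_image, Finset.mem_range] at hx
      obtain ⟨m, hm, rfl⟩ := hx
      rw [Polynomial.eval_sub, hLeval, hReval]
      have : σ * -(m : ℝ) = -((m : ℝ) * σ) := by ring
      rw [this, keyA σ n m (Nat.lt_succ_iff.1 hm)]
      ring
    · have hcard : ((Finset.range (n + 1)).image (fun m : ℕ => -(m : ℝ))).card = n + 1 := by
        rw [Finset.card_image_of_injective]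
        · simp
        · intro a b hab
          exact_mod_cast neg_injective hab
      rw [hcard]
      exact lt_of_le_of_lt (Polynomial.natDegree_sub_le _ _)
        (Nat.lt_succ_iff.2 (max_le hLdeg hRdeg))
  have : L = R := by linear_combination (norm := ring_nf) hzero
  calc ∑ k ∈ Finset.range (n + 1), genFacCoeff n k σ * riseFac t k
      = L.eval t := (hLeval t).symm
    _ = R.eval t := by rw [this]
    _ = riseFac (σ * t) n := hReval t
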